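/- Let (Σ,g) be a 2-dimensional Riemannian manifold and u a smooth function on Σ. Define the symmetric tensor S_{ij} = R_{ij} - 2∂_i u ∂_j u and its trace S = R - 2|∇u|²_g, where R is the scalar curvature. Suppose the Ricci tensor satisfies Ric_g ≤ ε du⊗du (as quadratic forms) with ε ≤ 4(1-α)/(1-2α) for some α > 1/2. Then the tensor T_{ij} = S_{ij} - α S g_{ij} is nonnegative as a quadratic form, i.e., T_{ij}V^iV^j ≥ 0 for every tangent vector V. -/

import Mathlib

/-! A vector orthogonal to `∇u` shows `R ≤ 0`, and testing the pinching on `∇u` itself gives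
`R ≤ 2ε|∇u|²`. By Cauchy–Schwarz, `T(v,v) ≥ c‖v‖²` with `c = (1/2 - α)R + (2α - 2)|∇u|²`.
The first bound gives `c ≥ (2α - 2)|∇u|²`, the second together with the bound on `ε` gives
`c ≥ (2 - 2α)|∇u|²`, so `c ≥ 0`. -/

open Module

theorem exists_ne_zero_inner_eq_zero {𝕜 V : Type*} [RCLike 𝕜] [NormedAddCommGroup V]
    [InnerProductSpace 𝕜 V] (hV : 1 < finrank 𝕜 V) (w : V) :
    ∃ v : V, v ≠ 0 ∧ inner 𝕜 w v = 0 := by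
  have : FiniteDimensional 𝕜 V := Module.finite_of_finrank_pos (by omega)
  obtain ⟨v, hv, hv0⟩ := Submodule.exists_mem_ne_zero_of_ne_bot (p := (𝕜 ∙ w)ᗮ) fun hbot => by
    have hline := finrank_span_le_card (R := 𝕜) ({w} : Set V)
    rw [Submodule.orthogonal_eq_bot_iff.mp hbot, finrank_top] at hline
    simp only [Set.toFinset_singleton, Finset.card_singleton] at hline
    omega
  exact ⟨v, hv0, Submodule.mem_orthogonal_singleton_iff_inner_right.mp hv⟩

theorem pinching_coeff_nonneg {R ε α s : ℝ} (hα : 1 / 2 < α)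
    (hε : ε ≤ 4 * (1 - α) / (1 - 2 * α)) (hR : R ≤ 0) (hs : 0 ≤ s)
    (hRs : R / 2 * s ≤ ε * s ^ 2) :
    0 ≤ (1 / 2 - α) * R + (2 * α - 2) * s := by
  rw [le_div_iff_of_neg' (by linarith)] at hε
  have h_ge : (2 * α - 2) * s ≤ (1 / 2 - α) * R + (2 * α - 2) * s := by nlinarith
  have h_ge' : (2 - 2 * α) * s ≤ (1 / 2 - α) * R + (2 * α - 2) * s := by
    rcases hs.eq_or_lt with rfl | hs
    · linarith
    · have hR' : R / 2 ≤ ε * s := le_of_mul_le_mul_right (by nlinarith) hs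
      nlinarith
  rcases le_total α 1 with h | h <;> nlinarith

/-- Pointwise statement on a surface `Σ`. At a point, the tangent space is a
2-dimensional real inner product space `V`; on a surface `Ric = (R/2)g`, so
the Ricci quadratic form is `v ↦ (R/2)‖v‖²`, while `du⊗du` is `v ↦ ⟨w,v⟩²`
with `w = ∇u`. The tensor `S_{ij} = R_{ij} - 2∂_iu∂_ju` has trace
`S = R - 2‖w‖²`. If `Ric ≤ ε du⊗du` as quadratic forms, with
`ε ≤ 4(1-α)/(1-2α)` and `α > 1/2`, then `T = S_{ij} - α S g_{ij}` is a
nonnegative quadratic form. -/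
theorem stmt6 {V : Type*} [NormedAddCommGroup V] [InnerProductSpace ℝ V]
    (hdim : Module.finrank ℝ V = 2) (R ε α : ℝ) (w : V)
    (hα : 1 / 2 < α) (hε : ε ≤ 4 * (1 - α) / (1 - 2 * α))
    (hRic : ∀ v : V, (R / 2) * ‖v‖ ^ 2 ≤ ε * (inner ℝ w v : ℝ) ^ 2) :
    ∀ v : V,
      0 ≤ ((R / 2) * ‖v‖ ^ 2 - 2 * (inner ℝ w v : ℝ) ^ 2) -
          α * (R - 2 * ‖w‖ ^ 2) * ‖v‖ ^ 2 := by
  obtain ⟨v₀, hv₀, hwv₀⟩ := exists_ne_zero_inner_eq_zero (𝕜 := ℝ) (by omega) w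
  have hR : R ≤ 0 := by
    have := hRic v₀
    rw [hwv₀] at this
    nlinarith [pow_pos (norm_pos_iff.mpr hv₀) 2]
  have hRw : R / 2 * ‖w‖ ^ 2 ≤ ε * (‖w‖ ^ 2) ^ 2 := by
    simpa only [real_inner_self_eq_norm_sq] using hRic w
  have hC := pinching_coeff_nonneg hα hε hR (sq_nonneg ‖w‖) hRw
  intro v
  have hCS : inner ℝ w v ^ 2 ≤ ‖w‖ ^ 2 * ‖v‖ ^ 2 := by
    rw [← mul_pow, ← sq_abs]
    exact pow_le_pow_left₀ (abs_nonneg _) (abs_real_inner_le_norm w v) 2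
  nlinarith [mul_nonneg hC (sq_nonneg ‖v‖)]
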